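/- arXiv:1003.3982 — 2 statements merged into one kernel-verified Lean document; each statement's English description precedes it below -/
import Mathlib

section
/- Let f : ℝ → ℂ be continuous and define Ω_f^{[2]}(δ) = sup{ ‖f(A)R − Rf(A)‖ : A bounded self-adjoint, ‖R‖ = 1, ‖AR − RA‖ < δ }. Then the function δ ↦ δ^{−1} Ω_f^{[2]}(δ) is nonincreasing on (0,∞); in particular Ω_f^{[2]}(δ₁ + δ₂) ≤ Ω_f^{[2]}(δ₁) + Ω_f^{[2]}(δ₂) for all δ₁, δ₂ > 0. -/
open scoped ENNReal

/-- The operator modulus of continuity `Ω_f^{[2]}`, defined with commutators; for a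
self-adjoint `A`, the operator `f(A)` is `cfc (fun z : ℂ => f z.re) A` (the continuous
functional calculus applied to the extension of `f : ℝ → ℂ` to the (real) spectrum). -/
noncomputable def Omega2 (H : Type*) [NormedAddCommGroup H] [InnerProductSpace ℂ H]
    [CompleteSpace H] (f : ℝ → ℂ) (δ : ℝ) : ℝ≥0∞ :=
  sSup {r : ℝ≥0∞ | ∃ A R : H →L[ℂ] H, IsSelfAdjoint A ∧ ‖R‖ = 1 ∧ ‖A * R - R * A‖ < δ ∧
    r = ‖cfc (fun z : ℂ => f z.re) A * R - R * cfc (fun z : ℂ => f z.re) A‖₊}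

-- existence of λ with ‖S + λI‖ = 1 when ‖S‖ ≤ 1
lemma exists_shift {H : Type*} [NormedAddCommGroup H] [InnerProductSpace ℂ H]
    [CompleteSpace H] [Nontrivial H] (S : H →L[ℂ] H) (hS : ‖S‖ ≤ 1) :
    ∃ l : ℝ, ‖S + (l : ℂ) • (1 : H →L[ℂ] H)‖ = 1 := by
  set g : ℝ → ℝ := fun l => ‖S + (l : ℂ) • (1 : H →L[ℂ] H)‖ with hg
  have hcont : Continuous g := by
    apply Continuous.norm
    exact continuous_const.add ((Complex.continuous_ofReal).smul continuous_const)
  have h0 : g 0 ≤ 1 := by simpa [hg] using hS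
  have h2 : 1 ≤ g 2 := by
    have hnorm1 : ‖((2:ℝ) : ℂ) • (1 : H →L[ℂ] H)‖ = 2 := by
      rw [norm_smul]
      simp
    have htri : ‖((2:ℝ) : ℂ) • (1 : H →L[ℂ] H)‖ ≤ g 2 + ‖S‖ := by
      calc ‖((2:ℝ) : ℂ) • (1 : H →L[ℂ] H)‖
          = ‖(S + ((2:ℝ) : ℂ) • (1 : H →L[ℂ] H)) - S‖ := by rw [add_sub_cancel_left]
        _ ≤ g 2 + ‖S‖ := norm_sub_le _ _
    linarith [hnorm1 ▸ htri]
  have : (1:ℝ) ∈ Set.Icc (g 0) (g 2) := ⟨h0, h2⟩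
  have := intermediate_value_Icc (by norm_num : (0:ℝ) ≤ 2) hcont.continuousOn this
  obtain ⟨l, _, hl⟩ := this
  exact ⟨l, hl⟩

lemma omega2_scale {H : Type*} [NormedAddCommGroup H] [InnerProductSpace ℂ H]
    [CompleteSpace H] (f : ℝ → ℂ) {δ₁ δ₂ : ℝ} (h1 : 0 < δ₁) (h12 : δ₁ ≤ δ₂) :
    Omega2 H f δ₂ ≤ ENNReal.ofReal (δ₂ / δ₁) * Omega2 H f δ₁ := by
  apply sSup_le
  rintro r ⟨A, R, hA, hR, hcomm, rfl⟩
  have h2 : 0 < δ₂ := lt_of_lt_of_le h1 h12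
  set t : ℝ := δ₁ / δ₂ with ht
  have htpos : 0 < t := div_pos h1 h2
  have htle : t ≤ 1 := div_le_one_of_le₀ h12 h2.le
  -- H is nontrivial since ‖R‖ = 1
  have hRne : R ≠ 0 := by
    intro h; rw [h] at hR; simp at hR
  obtain ⟨x, hx⟩ : ∃ x, R x ≠ 0 := by
    by_contra h; push_neg at h
    exact hRne (ContinuousLinearMap.ext fun x => by simp [h x])
  have : Nontrivial H := nontrivial_of_ne (R x) 0 hx
  -- choose λ
  have hnormtR : ‖(t : ℂ) • R‖ ≤ 1 := by
    rw [norm_smul, hR, mul_one, Complex.norm_real, Real.norm_eq_abs, abs_of_pos htpos]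
    exact htle
  obtain ⟨l, hl⟩ := exists_shift ((t : ℂ) • R) hnormtR
  set R' : H →L[ℂ] H := (t : ℂ) • R + (l : ℂ) • 1 with hR'
  -- commutator identity
  have hkey : ∀ X : H →L[ℂ] H, X * R' - R' * X = (t : ℂ) • (X * R - R * X) := by
    intro X
    simp only [hR', mul_add, add_mul, mul_smul_comm, smul_mul_assoc, mul_one, one_mul,
      smul_sub]
    abel
  set X : H →L[ℂ] H := cfc (fun z : ℂ => f z.re) A with hX
  have hcomm' : ‖A * R' - R' * A‖ < δ₁ := by
    rw [hkey A, norm_smul, Complex.norm_real, Real.norm_eq_abs, abs_of_pos htpos]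
    calc t * ‖A * R - R * A‖ < t * δ₂ := by exact (mul_lt_mul_iff_right₀ htpos).mpr hcomm
      _ = δ₁ := by rw [ht]; field_simp
  have hmem : (‖X * R' - R' * X‖₊ : ℝ≥0∞) ∈
      {r : ℝ≥0∞ | ∃ A R : H →L[ℂ] H, IsSelfAdjoint A ∧ ‖R‖ = 1 ∧ ‖A * R - R * A‖ < δ₁ ∧
        r = ‖cfc (fun z : ℂ => f z.re) A * R - R * cfc (fun z : ℂ => f z.re) A‖₊} :=
    ⟨A, R', hA, hl, hcomm', rfl⟩
  have hle : (‖X * R' - R' * X‖₊ : ℝ≥0∞) ≤ Omega2 H f δ₁ := le_sSup hmem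
  have hnorm' : (‖X * R' - R' * X‖₊ : ℝ≥0∞)
      = ENNReal.ofReal t * (‖X * R - R * X‖₊ : ℝ≥0∞) := by
    rw [hkey X, ← enorm_eq_nnnorm, ← enorm_eq_nnnorm, ← ofReal_norm, ← ofReal_norm, norm_smul,
      Complex.norm_real, Real.norm_eq_abs, abs_of_pos htpos,
      ENNReal.ofReal_mul htpos.le]
  have htne : ENNReal.ofReal t ≠ 0 := by
    simp [ENNReal.ofReal_eq_zero, not_le, htpos]
  have htnetop : ENNReal.ofReal t ≠ ⊤ := ENNReal.ofReal_ne_top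
  have : (‖X * R - R * X‖₊ : ℝ≥0∞) ≤ (ENNReal.ofReal t)⁻¹ * Omega2 H f δ₁ := by
    calc (‖X * R - R * X‖₊ : ℝ≥0∞)
        = (ENNReal.ofReal t)⁻¹ * ((ENNReal.ofReal t) * (‖X * R - R * X‖₊ : ℝ≥0∞)) := by
          rw [← mul_assoc, ENNReal.inv_mul_cancel htne htnetop, one_mul]
      _ = (ENNReal.ofReal t)⁻¹ * (‖X * R' - R' * X‖₊ : ℝ≥0∞) := by rw [hnorm']
      _ ≤ (ENNReal.ofReal t)⁻¹ * Omega2 H f δ₁ := by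
          exact mul_le_mul_right (le_sSup hmem) _
  calc (‖X * R - R * X‖₊ : ℝ≥0∞) ≤ (ENNReal.ofReal t)⁻¹ * Omega2 H f δ₁ := this
    _ = ENNReal.ofReal (δ₂ / δ₁) * Omega2 H f δ₁ := by
        rw [← ENNReal.ofReal_inv_of_pos htpos, ht, inv_div]

lemma omega2_smul_le {H : Type*} [NormedAddCommGroup H] [InnerProductSpace ℂ H]
    [CompleteSpace H] (f : ℝ → ℂ) {δ₁ δ₂ : ℝ} (h1 : 0 < δ₁) (h12 : δ₁ ≤ δ₂) :
    ENNReal.ofReal (δ₁ / δ₂) * Omega2 H f δ₂ ≤ Omega2 H f δ₁ := by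
  have h2 : 0 < δ₂ := lt_of_lt_of_le h1 h12
  calc ENNReal.ofReal (δ₁ / δ₂) * Omega2 H f δ₂
      ≤ ENNReal.ofReal (δ₁ / δ₂) * (ENNReal.ofReal (δ₂ / δ₁) * Omega2 H f δ₁) :=
        mul_le_mul_right (omega2_scale f h1 h12) _
    _ = Omega2 H f δ₁ := by
        rw [← mul_assoc, ← ENNReal.ofReal_mul (div_pos h1 h2).le]
        rw [div_mul_div_comm, mul_comm δ₂ δ₁, div_self (by positivity), ENNReal.ofReal_one,
          one_mul]

lemma omega2_subadd {H : Type*} [NormedAddCommGroup H] [InnerProductSpace ℂ H]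
    [CompleteSpace H] (f : ℝ → ℂ) {δ₁ δ₂ : ℝ} (h1 : 0 < δ₁) (h2 : 0 < δ₂) (h12 : δ₁ ≤ δ₂) :
    Omega2 H f (δ₁ + δ₂) ≤ Omega2 H f δ₁ + Omega2 H f δ₂ := by
  have hsum : Omega2 H f (δ₁ + δ₂) ≤ ENNReal.ofReal ((δ₁ + δ₂) / δ₂) * Omega2 H f δ₂ :=
    omega2_scale f h2 (by linarith)
  have hsplit : ENNReal.ofReal ((δ₁ + δ₂) / δ₂) = ENNReal.ofReal (δ₁ / δ₂) + 1 := by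
    rw [add_div, div_self h2.ne', ENNReal.ofReal_add (by positivity) zero_le_one,
      ENNReal.ofReal_one]
  calc Omega2 H f (δ₁ + δ₂) ≤ ENNReal.ofReal ((δ₁ + δ₂) / δ₂) * Omega2 H f δ₂ := hsum
    _ = ENNReal.ofReal (δ₁ / δ₂) * Omega2 H f δ₂ + Omega2 H f δ₂ := by
        rw [hsplit, add_mul, one_mul]
    _ ≤ Omega2 H f δ₁ + Omega2 H f δ₂ :=
        add_le_add_left (omega2_smul_le f h1 h12) _


theorem stmt9 {H : Type*} [NormedAddCommGroup H] [InnerProductSpace ℂ H] [CompleteSpace H]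
    (f : ℝ → ℂ) (hf : Continuous f) :
    (∀ δ₁ δ₂ : ℝ, 0 < δ₁ → δ₁ ≤ δ₂ →
        (ENNReal.ofReal δ₂)⁻¹ * Omega2 H f δ₂ ≤ (ENNReal.ofReal δ₁)⁻¹ * Omega2 H f δ₁) ∧
    (∀ δ₁ δ₂ : ℝ, 0 < δ₁ → 0 < δ₂ →
        Omega2 H f (δ₁ + δ₂) ≤ Omega2 H f δ₁ + Omega2 H f δ₂) := by
  constructor
  · intro δ₁ δ₂ h1 h12
    have h2 : 0 < δ₂ := lt_of_lt_of_le h1 h12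
    calc (ENNReal.ofReal δ₂)⁻¹ * Omega2 H f δ₂
        ≤ (ENNReal.ofReal δ₂)⁻¹ * (ENNReal.ofReal (δ₂ / δ₁) * Omega2 H f δ₁) :=
          mul_le_mul_right (omega2_scale f h1 h12) _
      _ = (ENNReal.ofReal δ₁)⁻¹ * Omega2 H f δ₁ := by
          rw [ENNReal.ofReal_div_of_pos h1, ← mul_assoc, div_eq_mul_inv, ← mul_assoc,
            ENNReal.inv_mul_cancel (by simp [h2]) ENNReal.ofReal_ne_top, one_mul]
  · intro δ₁ δ₂ h1 h2
    rcases le_total δ₁ δ₂ with h | h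
    · exact omega2_subadd f h1 h2 h
    · rw [add_comm δ₁ δ₂, add_comm (Omega2 H f δ₁)]
      exact omega2_subadd f h2 h1 h
end

section
/- For f(t) = c₁e^{iσt} + c₂e^{−iσt} + c₃ with c₁, c₂, c₃ ∈ ℂ and σ > 0, the scalar modulus of continuity satisfies ω_f(δ) = (|c₁| + |c₂|) β_σ(δ) for all δ > 0, where β_σ(δ) = 2 sin(σδ/2) for 0 ≤ δ ≤ π/σ and β_σ(δ) = 2 otherwise. -/
open Real

lemma aux1 (θ : ℝ) : ‖Complex.exp (θ * Complex.I) - 1‖ = 2 * |Real.sin (θ / 2)| := by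
  have h1 : Real.cos θ = 1 - 2 * Real.sin (θ/2) ^ 2 := by
    have hc := Real.cos_sq (θ/2)
    have h2 : 2 * (θ/2) = θ := by ring
    rw [h2] at hc
    nlinarith [Real.sin_sq_add_cos_sq (θ/2)]
  have h3 : Real.sin θ ^ 2 = 1 - Real.cos θ ^ 2 := Real.sin_sq θ
  rw [Complex.exp_mul_I, ← Complex.ofReal_cos, ← Complex.ofReal_sin]
  rw [Complex.norm_def, Complex.normSq_apply]
  have hre : ((Real.cos θ : ℂ) + (Real.sin θ : ℂ) * Complex.I - 1).re = Real.cos θ - 1 := by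
    simp [Complex.cos_ofReal_re, Complex.sin_ofReal_re]
  have him : ((Real.cos θ : ℂ) + (Real.sin θ : ℂ) * Complex.I - 1).im = Real.sin θ := by
    simp [Complex.cos_ofReal_re, Complex.sin_ofReal_re]
  rw [hre, him]
  have key : (Real.cos θ - 1) * (Real.cos θ - 1) + Real.sin θ * Real.sin θ
      = (2 * |Real.sin (θ/2)|) ^ 2 := by
    have := sq_abs (Real.sin (θ/2))
    nlinarith
  rw [key, Real.sqrt_sq (by positivity)]

lemma aux2 (a b : ℂ) : ∃ s : ℝ, ‖a * Complex.exp (s * Complex.I) +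
    b * Complex.exp (-(s * Complex.I))‖ = ‖a‖ + ‖b‖ := by
  refine ⟨(b.arg - a.arg) / 2, ?_⟩
  set s := (b.arg - a.arg) / 2 with hs
  set θ := (a.arg + b.arg) / 2 with hθ
  have e1 : a * Complex.exp (s * Complex.I) =
      (‖a‖ : ℂ) * Complex.exp (θ * Complex.I) := by
    conv_lhs => rw [← Complex.norm_mul_exp_arg_mul_I a]
    rw [mul_assoc, ← Complex.exp_add]
    congr 2
    push_cast [hs, hθ]
    ring
  have e2 : b * Complex.exp (-(s * Complex.I)) =
      (‖b‖ : ℂ) * Complex.exp (θ * Complex.I) := by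
    conv_lhs => rw [← Complex.norm_mul_exp_arg_mul_I b]
    rw [mul_assoc, ← Complex.exp_add]
    congr 2
    push_cast [hs, hθ]
    ring
  rw [e1, e2, ← add_mul, ← Complex.ofReal_add, norm_mul, Complex.norm_real, Real.norm_eq_abs,
    Complex.norm_exp_ofReal_mul_I, mul_one, abs_of_nonneg (by positivity)]

/-- The Bernstein majorant `β_σ`. -/
noncomputable def betaFn (σ δ : ℝ) : ℝ := if δ ≤ π / σ then 2 * Real.sin (σ * δ / 2) else 2

theorem stmt11 (σ : ℝ) (hσ : 0 < σ) (c₁ c₂ c₃ : ℂ) (f : ℝ → ℂ)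
    (hf : ∀ t : ℝ, f t = c₁ * Complex.exp (Complex.I * σ * t) +
        c₂ * Complex.exp (-(Complex.I * σ * t)) + c₃)
    (δ : ℝ) (hδ : 0 < δ) :
    sSup {r : ℝ | ∃ x y : ℝ, |x - y| < δ ∧ r = ‖f x - f y‖} =
      (‖c₁‖ + ‖c₂‖) * betaFn σ δ := by
  set C := ‖c₁‖ + ‖c₂‖ with hC
  have hC0 : 0 ≤ C := by positivity
  set S := {r : ℝ | ∃ x y : ℝ, |x - y| < δ ∧ r = ‖f x - f y‖} with hS
  -- decomposition
  have hdiff : ∀ x y : ℝ, f x - f y =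
      c₁ * Complex.exp (Complex.I * σ * y) * (Complex.exp ((σ * (x - y) : ℝ) * Complex.I) - 1) +
      c₂ * Complex.exp (-(Complex.I * σ * y)) *
        (Complex.exp ((-(σ * (x - y)) : ℝ) * Complex.I) - 1) := by
    intro x y
    rw [hf x, hf y]
    have e1 : Complex.I * σ * x = Complex.I * σ * y + (σ * (x - y) : ℝ) * Complex.I := by
      push_cast; ring
    have e2 : -(Complex.I * σ * x) = -(Complex.I * σ * y) + (-(σ * (x - y)) : ℝ) * Complex.I := by
      push_cast; ring
    rw [e2, e1, Complex.exp_add, Complex.exp_add]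
    ring
  have habsI : ∀ y : ℝ, ‖Complex.exp (Complex.I * σ * y)‖ = 1 := by
    intro y
    have : Complex.I * σ * y = ((σ * y : ℝ) : ℂ) * Complex.I := by push_cast; ring
    rw [this, Complex.norm_exp_ofReal_mul_I]
  have habsI' : ∀ y : ℝ, ‖Complex.exp (-(Complex.I * σ * y))‖ = 1 := by
    intro y
    have : -(Complex.I * σ * y) = ((-(σ * y) : ℝ) : ℂ) * Complex.I := by push_cast; ring
    rw [this, Complex.norm_exp_ofReal_mul_I]
  have hsinneg : ∀ t : ℝ, |Real.sin (-t / 2)| = |Real.sin (t / 2)| := by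
    intro t
    rw [neg_div, Real.sin_neg, abs_neg]
  -- upper pointwise bound
  have hub : ∀ x y : ℝ, ‖f x - f y‖ ≤ C * (2 * |Real.sin (σ * (x - y) / 2)|) := by
    intro x y
    rw [hdiff x y]
    calc ‖_‖ ≤ ‖c₁ * Complex.exp (Complex.I * σ * y) *
          (Complex.exp ((σ * (x - y) : ℝ) * Complex.I) - 1)‖ +
          ‖c₂ * Complex.exp (-(Complex.I * σ * y)) *
            (Complex.exp ((-(σ * (x - y)) : ℝ) * Complex.I) - 1)‖ := by
            exact norm_add_le _ _
      _ = C * (2 * |Real.sin (σ * (x - y) / 2)|) := by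
          rw [norm_mul, norm_mul, norm_mul, norm_mul, habsI, habsI', aux1, aux1, hsinneg]
          ring
  -- attainability
  have hattain : ∀ h : ℝ, ∃ x y : ℝ, x - y = h ∧
      ‖f x - f y‖ = C * (2 * |Real.sin (σ * h / 2)|) := by
    intro h
    obtain ⟨s, hs⟩ := aux2 (c₁ * (Complex.exp ((σ * h : ℝ) * Complex.I) - 1))
      (c₂ * (Complex.exp ((-(σ * h) : ℝ) * Complex.I) - 1))
    refine ⟨s / σ + h, s / σ, by ring, ?_⟩
    have hxy : (s / σ + h) - s / σ = h := by ring
    rw [hdiff, hxy]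
    have hσc : (σ : ℂ) ≠ 0 := by exact_mod_cast hσ.ne'
    have es : Complex.I * σ * (s / σ : ℝ) = (s : ℂ) * Complex.I := by
      push_cast
      field_simp
    rw [es]
    have : c₁ * Complex.exp ((s : ℝ) * Complex.I) * (Complex.exp ((σ * h : ℝ) * Complex.I) - 1) +
        c₂ * Complex.exp (-((s : ℝ) * Complex.I)) *
          (Complex.exp ((-(σ * h) : ℝ) * Complex.I) - 1) =
        (c₁ * (Complex.exp ((σ * h : ℝ) * Complex.I) - 1)) * Complex.exp ((s : ℝ) * Complex.I) +
        (c₂ * (Complex.exp ((-(σ * h) : ℝ) * Complex.I) - 1)) *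
          Complex.exp (-((s : ℝ) * Complex.I)) := by ring
    rw [this, hs, norm_mul, norm_mul, aux1, aux1, hsinneg]
    ring
  -- bddAbove and nonempty
  have hmemB : ∀ r ∈ S, r ≤ C * betaFn σ δ := by
    rintro r ⟨x, y, hxy, rfl⟩
    refine (hub x y).trans (mul_le_mul_of_nonneg_left ?_ hC0)
    unfold betaFn
    split_ifs with hle
    · -- δ ≤ π / σ
      have hσδ : σ * δ ≤ π := by
        rw [le_div_iff₀ hσ] at hle
        linarith [hle]
      have ht : |σ * (x - y) / 2| < σ * δ / 2 := by
        rw [abs_div, abs_mul, abs_of_nonneg hσ.le, abs_of_nonneg (by norm_num : (0:ℝ) ≤ 2)]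
        have := mul_lt_mul_of_pos_left hxy hσ
        linarith
      have hb : σ * δ / 2 ≤ π / 2 := by linarith
      rcases abs_cases (Real.sin (σ * (x - y) / 2)) with ⟨he, _⟩ | ⟨he, _⟩
      · rw [he]
        have := abs_le.mp ht.le
        have := Real.sin_le_sin_of_le_of_le_pi_div_two (by linarith [this.1]) hb
          (le_trans (le_abs_self _) ht.le)
        linarith
      · rw [he, ← Real.sin_neg]
        have h2 := abs_le.mp ht.le
        have := Real.sin_le_sin_of_le_of_le_pi_div_two
          (x := -(σ * (x - y) / 2)) (by linarith [h2.2]) hb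
          (le_trans (neg_le_abs _) ht.le)
        linarith
    · have := Real.abs_sin_le_one (σ * (x - y) / 2)
      linarith
  have hbdd : BddAbove S := ⟨C * betaFn σ δ, hmemB⟩
  have hne : S.Nonempty := ⟨‖f 0 - f 0‖, 0, 0, by simpa using hδ, rfl⟩
  refine le_antisymm (csSup_le hne hmemB) ?_
  -- lower bound
  unfold betaFn
  split_ifs with hle
  · -- δ ≤ π/σ : use sequence approaching δ
    have hσδ : σ * δ ≤ π := by
      rw [le_div_iff₀ hσ] at hle
      linarith [hle]
    have hsin_nonneg : 0 ≤ Real.sin (σ * δ / 2) :=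
      Real.sin_nonneg_of_nonneg_of_le_pi (by positivity) (by linarith [Real.pi_pos])
    set u : ℕ → ℝ := fun n => δ - δ / (n + 1) with hu
    have hun : ∀ n : ℕ, |u n| < δ := by
      intro n
      have h1 : 0 < δ / (n + 1) := by positivity
      have h2 : δ / (n + 1) ≤ δ := by
        rw [div_le_iff₀ (by positivity)]
        nlinarith [Nat.cast_nonneg (α := ℝ) n]
      rw [abs_of_nonneg (by simp only [hu]; linarith)]
      simp only [hu]; linarith
    have hmem : ∀ n : ℕ, C * (2 * |Real.sin (σ * u n / 2)|) ≤ sSup S := by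
      intro n
      obtain ⟨x, y, hxy, hval⟩ := hattain (u n)
      refine le_csSup hbdd ?_
      exact ⟨x, y, by rw [hxy]; exact hun n, hval.symm⟩
    have hulim : Filter.Tendsto u Filter.atTop (nhds δ) := by
      have : Filter.Tendsto (fun n : ℕ => δ / (n + 1)) Filter.atTop (nhds 0) := by
        have := tendsto_one_div_add_atTop_nhds_zero_nat.const_mul δ
        simpa [div_eq_mul_inv, mul_comm] using this
      have := Filter.Tendsto.sub (tendsto_const_nhds (x := δ)) this
      simpa using this
    have hcont : Filter.Tendsto (fun n => C * (2 * |Real.sin (σ * u n / 2)|)) Filter.atTop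
        (nhds (C * (2 * |Real.sin (σ * δ / 2)|))) := by
      have hcont2 : Continuous fun t : ℝ => C * (2 * |Real.sin (σ * t / 2)|) :=
        continuous_const.mul (continuous_const.mul
          ((Real.continuous_sin.comp ((continuous_const.mul continuous_id).div_const 2)).abs))
      exact (hcont2.tendsto δ).comp hulim
    have := le_of_tendsto hcont (Filter.Eventually.of_forall hmem)
    rwa [abs_of_nonneg hsin_nonneg] at this
  · -- δ > π/σ : attained at h = π/σ
    obtain ⟨x, y, hxy, hval⟩ := hattain (π / σ)
    have hπσ : 0 < π / σ := by positivity
    have hmem : ‖f x - f y‖ ∈ S := by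
      refine ⟨x, y, ?_, rfl⟩
      rw [hxy, abs_of_pos hπσ]
      exact lt_of_not_ge hle
    have := le_csSup hbdd hmem
    rw [hval] at this
    have hv : σ * (π / σ) / 2 = π / 2 := by field_simp
    rw [hv, Real.sin_pi_div_two] at this
    simpa using this
end
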